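/- arXiv:2106.05621 — 3 statements merged into one kernel-verified Lean document; each statement's English description precedes it below -/
import Mathlib

section
/- Let Q = ℂ(x₁,…,x_n) with n ≥ 1, and let f, g ∈ Q be polynomials of degree 1 (linear polynomials in the variables). Then the set of square roots {√f, √g} is rationalizable: there exists a ring endomorphism φ : Q → Q such that both φ(f) and φ(g) are squares in Q. -/
open MvPolynomial

set_option maxHeartbeats 1000000
set_option synthInstance.maxHeartbeats 400000

namespace Stmt10Aux

noncomputable section

variable {m : ℕ}

abbrev MvA (m : ℕ) : Type := MvPolynomial (Fin (m+1)) ℂ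
abbrev KK (m : ℕ) : Type := FractionRing (MvA m)
abbrev R0 (m : ℕ) : Type := MvPolynomial (Fin m) ℂ
abbrev FF (m : ℕ) : Type := FractionRing (R0 m)

/-- the image of the variable `X i` in the fraction field -/
def xv (m : ℕ) (i : Fin (m+1)) : KK m := algebraMap (MvA m) (KK m) (X i)

/-- the scalar embedding `ℂ → KK m` -/
def sc (m : ℕ) : ℂ →+* KK m := (algebraMap (MvA m) (KK m)).comp (C : ℂ →+* MvA m)

/-- embedding of the polynomial ring in the last `m` variables -/
def rh (m : ℕ) : R0 m →+* KK m :=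
  (algebraMap (MvA m) (KK m)).comp (rename Fin.succ : R0 m →ₐ[ℂ] MvA m).toRingHom

lemma rh_injective : Function.Injective (rh m) := by
  have h1 : Function.Injective (algebraMap (MvA m) (KK m)) := IsFractionRing.injective _ _
  have h2 := rename_injective (R := ℂ) (Fin.succ : Fin m → Fin (m+1)) (Fin.succ_injective m)
  rw [rh, RingHom.coe_comp]
  exact h1.comp h2

instance instRK : Algebra (R0 m) (KK m) := (rh m).toAlgebra

instance instNZ : FaithfulSMul (R0 m) (KK m) :=
  (faithfulSMul_iff_algebraMap_injective (R0 m) (KK m)).mpr rh_injective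

instance instFK : Algebra (FF m) (KK m) := FractionRing.liftAlgebra _ _

instance instTower : IsScalarTower (R0 m) (FF m) (KK m) :=
  FractionRing.isScalarTower_liftAlgebra _ _

/-- the induced embedding of the rational function field in the last `m` variables -/
def th (m : ℕ) : FF m →+* KK m := algebraMap (FF m) (KK m)

lemma th_algebraMap (q : R0 m) : th m (algebraMap (R0 m) (FF m) q) = rh m q :=
  ((IsScalarTower.algebraMap_apply (R0 m) (FF m) (KK m) q).symm : _)

lemma sc_injective : Function.Injective (sc m) := by
  have h1 : Function.Injective (algebraMap (MvA m) (KK m)) := IsFractionRing.injective _ _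
  rw [sc, RingHom.coe_comp]
  exact h1.comp (C_injective _ _)

lemma sc_ne_zero {z : ℂ} (hz : z ≠ 0) : sc m z ≠ 0 := by
  rw [← map_zero (sc m)]
  exact fun h => hz (sc_injective h)

lemma xv_ne_zero (i : Fin (m+1)) : xv m i ≠ 0 := by
  rw [xv, ← map_zero (algebraMap (MvA m) (KK m))]
  exact fun h => X_ne_zero i (IsFractionRing.injective _ _ h)

lemma sc_mem_range (z : ℂ) : sc m z ∈ (th m).fieldRange := by
  refine ⟨algebraMap (R0 m) (FF m) (C z), ?_⟩
  rw [th_algebraMap]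
  simp [rh, sc]

lemma xv_mem_range {i : Fin (m+1)} (hi : i ≠ 0) : xv m i ∈ (th m).fieldRange := by
  obtain ⟨j, rfl⟩ := Fin.exists_succ_eq.mpr hi
  refine ⟨algebraMap (R0 m) (FF m) (X j), ?_⟩
  rw [th_algebraMap]
  simp [rh, xv]

lemma algRK : (algebraMap (R0 m) (KK m)) = rh m := rfl

lemma eval2_xv : (eval₂Hom (sc m) (xv m) : MvA m →+* KK m) = algebraMap (MvA m) (KK m) := by
  apply MvPolynomial.ringHom_ext
  · intro a
    simp [sc]
  · intro i
    simp [xv]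

lemma psi_eq (u : KK m) (p : MvA m) :
    eval₂Hom (sc m) (fun i => if i = 0 then u else xv m i) p
      = Polynomial.eval₂ (algebraMap (R0 m) (KK m)) u (finSuccEquiv ℂ m p) := by
  induction p using MvPolynomial.induction_on with
  | C a =>
      rw [finSuccEquiv_apply]
      simp [algRK, rh, sc]
  | add p q hp hq =>
      simp only [map_add, hp, hq, Polynomial.eval₂_add]
  | mul_X p i hp =>
      rw [map_mul, map_mul, Polynomial.eval₂_mul, hp]
      congr 1
      cases i using Fin.cases with
      | zero =>
          rw [finSuccEquiv_X_zero]
          simp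
      | succ j =>
          rw [finSuccEquiv_X_succ]
          simp [Fin.succ_ne_zero, algRK, rh, xv]

lemma transcendental_xv0 : Transcendental (FF m) (xv m 0) := by
  have h1 : Transcendental (R0 m) (xv m 0) := by
    rw [transcendental_iff]
    intro P hP
    have h2 : Polynomial.eval₂ (algebraMap (R0 m) (KK m)) (xv m 0)
        (finSuccEquiv ℂ m ((finSuccEquiv ℂ m).symm P)) = 0 := by
      rw [AlgEquiv.apply_symm_apply]
      rw [Polynomial.aeval_def] at hP
      exact hP
    rw [← psi_eq] at h2
    have h3 : (fun i : Fin (m+1) => if i = 0 then xv m 0 else xv m i) = xv m := by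
      funext i
      by_cases hi : i = 0 <;> simp [hi]
    rw [h3, eval2_xv] at h2
    have h4 : ((finSuccEquiv ℂ m).symm P) = 0 := by
      have := IsFractionRing.injective (MvA m) (KK m)
      exact this (by rw [h2, map_zero])
    have h5 := congrArg (finSuccEquiv ℂ m) h4
    rwa [AlgEquiv.apply_symm_apply, map_zero] at h5
  intro halg
  exact h1 ((IsFractionRing.isAlgebraic_iff (R0 m) (FF m) (KK m)).mpr halg)

lemma sub_exists (u : KK m) (hu : Transcendental (FF m) u) :
    ∃ φ : KK m →+* KK m, (∀ z, φ (sc m z) = sc m z) ∧ φ (xv m 0) = u ∧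
      (∀ i, i ≠ 0 → φ (xv m i) = xv m i) ∧ (∀ y ∈ (th m).fieldRange, φ y = y) := by
  set r : Fin (m+1) → KK m := fun i => if i = 0 then u else xv m i with hr
  set ψ : MvA m →+* KK m := eval₂Hom (sc m) r with hψ
  have hinj : Function.Injective ψ := by
    have key : ∀ p, ψ p = 0 → p = 0 := by
      intro p hp
      rw [hψ, hr, psi_eq] at hp
      set Q : Polynomial (FF m) :=
        (finSuccEquiv ℂ m p).map (algebraMap (R0 m) (FF m)) with hQ
      have h2 : Polynomial.aeval u Q = 0 := by
        rw [Polynomial.aeval_def, hQ, Polynomial.eval₂_map,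
          ← IsScalarTower.algebraMap_eq (R0 m) (FF m) (KK m)]
        exact hp
      have h3 : Q = 0 := (transcendental_iff.mp hu) Q h2
      have h4 : (finSuccEquiv ℂ m p) = 0 := by
        have hminj : Function.Injective
            (Polynomial.map (algebraMap (R0 m) (FF m)) :
              Polynomial (R0 m) → Polynomial (FF m)) :=
          Polynomial.map_injective _ (IsFractionRing.injective _ _)
        apply hminj
        rw [← hQ, h3, Polynomial.map_zero]
      have h5 := congrArg (finSuccEquiv ℂ m).symm h4
      rwa [AlgEquiv.symm_apply_apply, map_zero] at h5
    intro p q hpq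
    have := key (p - q) (by rw [map_sub, hpq, sub_self])
    exact sub_eq_zero.mp this
  refine ⟨IsFractionRing.lift hinj, ?_, ?_, ?_, ?_⟩
  · intro z
    have : sc m z = algebraMap (MvA m) (KK m) (C z) := rfl
    rw [this, IsFractionRing.lift_algebraMap]
    simp only [hψ, eval₂Hom_C]
    exact this.symm
  · have : xv m 0 = algebraMap (MvA m) (KK m) (X 0) := rfl
    rw [this, IsFractionRing.lift_algebraMap]
    simp [hψ, hr]
  · intro i hi
    have : xv m i = algebraMap (MvA m) (KK m) (X i) := rfl
    rw [this, IsFractionRing.lift_algebraMap]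
    simp only [hψ, eval₂Hom_X']
    rw [hr]
    simp only [hi, if_false]
    exact this.symm
  · rintro y ⟨e, rfl⟩
    have hcomp : ((IsFractionRing.lift hinj).comp (th m)) = th m := by
      apply IsLocalization.ringHom_ext (nonZeroDivisors (R0 m))
      refine RingHom.ext fun q => ?_
      simp only [RingHom.comp_apply]
      rw [th_algebraMap]
      have hrh : rh m q = algebraMap (MvA m) (KK m) (rename Fin.succ q) := rfl
      rw [hrh, IsFractionRing.lift_algebraMap]
      rw [hψ]
      have : (eval₂Hom (sc m) r) ((rename Fin.succ) q) = eval₂Hom (sc m) (r ∘ Fin.succ) q := by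
        rw [eval₂Hom_rename]
      rw [this]
      have h6 : r ∘ Fin.succ = fun j => xv m (Fin.succ j) := by
        funext j
        simp [hr, Fin.succ_ne_zero]
      rw [h6]
      have h7 : (eval₂Hom (sc m) (fun j => xv m (Fin.succ j)) : R0 m →+* KK m)
          = rh m := by
        apply MvPolynomial.ringHom_ext
        · intro a
          simp [sc, rh]
        · intro j
          simp [xv, rh]
      exact congrFun (congrArg (fun (F : R0 m →+* KK m) => ⇑F) h7) q
    exact congrFun (congrArg (fun (F : FF m →+* KK m) => ⇑F) hcomp) e

lemma ren_exists (σ : Equiv.Perm (Fin (m+1))) :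
    ∃ φ : KK m →+* KK m, (∀ z, φ (sc m z) = sc m z) ∧ ∀ i, φ (xv m i) = xv m (σ i) := by
  set ψ : MvA m →+* KK m :=
    (algebraMap (MvA m) (KK m)).comp (rename (σ : Fin (m+1) → Fin (m+1)) : MvA m →ₐ[ℂ] MvA m).toRingHom with hψ
  have hinj : Function.Injective ψ := by
    rw [hψ, RingHom.coe_comp]
    exact (IsFractionRing.injective _ _).comp (rename_injective _ σ.injective)
  refine ⟨IsFractionRing.lift hinj, ?_, ?_⟩
  · intro z
    have : sc m z = algebraMap (MvA m) (KK m) (C z) := rfl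
    rw [this, IsFractionRing.lift_algebraMap]
    simp [hψ, sc]
  · intro i
    have : xv m i = algebraMap (MvA m) (KK m) (X i) := rfl
    rw [this, IsFractionRing.lift_algebraMap]
    simp [hψ, xv]

lemma trans_lin (e₁ e₀ : KK m) (h₁ : e₁ ∈ (th m).fieldRange) (h₀ : e₀ ∈ (th m).fieldRange)
    (hne : e₁ ≠ 0) : Transcendental (FF m) (e₁ * xv m 0 + e₀) := by
  obtain ⟨c₁, rfl⟩ := h₁
  obtain ⟨c₀, rfl⟩ := h₀
  have hc₁ : c₁ ≠ 0 := fun h => hne (by rw [h, map_zero])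
  have hval : th m c₁ * xv m 0 + th m c₀
      = Polynomial.aeval (xv m 0) (Polynomial.C c₁ * Polynomial.X + Polynomial.C c₀) := by
    rw [map_add, map_mul, Polynomial.aeval_X, Polynomial.aeval_C, Polynomial.aeval_C]
    rfl
  rw [hval]
  refine transcendental_xv0.aeval _ ?_ ?_
  · rw [Polynomial.natDegree_linear hc₁]
    exact one_ne_zero
  · rw [Polynomial.leadingCoeff_linear hc₁]
    exact mem_nonZeroDivisors_of_ne_zero hc₁

lemma trans_quad (e₂ e₁ e₀ : KK m) (h₂ : e₂ ∈ (th m).fieldRange) (h₁ : e₁ ∈ (th m).fieldRange)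
    (h₀ : e₀ ∈ (th m).fieldRange) (hne : e₂ ≠ 0) :
    Transcendental (FF m) (e₂ * xv m 0 ^ 2 + e₁ * xv m 0 + e₀) := by
  obtain ⟨c₂, rfl⟩ := h₂
  obtain ⟨c₁, rfl⟩ := h₁
  obtain ⟨c₀, rfl⟩ := h₀
  have hc₂ : c₂ ≠ 0 := fun h => hne (by rw [h, map_zero])
  have hval : th m c₂ * xv m 0 ^ 2 + th m c₁ * xv m 0 + th m c₀
      = Polynomial.aeval (xv m 0)
          (Polynomial.C c₂ * Polynomial.X ^ 2 + Polynomial.C c₁ * Polynomial.X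
            + Polynomial.C c₀) := by
    rw [map_add, map_add, map_mul, map_mul, map_pow, Polynomial.aeval_X, Polynomial.aeval_C,
      Polynomial.aeval_C, Polynomial.aeval_C]
    rfl
  rw [hval]
  refine transcendental_xv0.aeval _ ?_ ?_
  · rw [Polynomial.natDegree_quadratic hc₂]
    exact two_ne_zero
  · rw [Polynomial.leadingCoeff_quadratic hc₂]
    exact mem_nonZeroDivisors_of_ne_zero hc₂

lemma trans_conic (aK bK u : KK m) (ha : aK ∈ (th m).fieldRange) (hb : bK ∈ (th m).fieldRange)
    (hrel : xv m 0 ^ 2 + aK * u * xv m 0 + bK = 0) : Transcendental (FF m) u := by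
  obtain ⟨a, rfl⟩ := ha
  obtain ⟨b, rfl⟩ := hb
  intro hu
  have hInt : IsIntegral (FF m) u := hu.isIntegral
  set A' : Subalgebra (FF m) (KK m) := Algebra.adjoin (FF m) ({u} : Set (KK m)) with hA'
  haveI : Module.Finite (FF m) A' := Module.Finite.iff_fg.mpr hInt.fg_adjoin_singleton
  haveI : Algebra.IsIntegral (FF m) A' := Algebra.IsIntegral.of_finite _ _
  have humem : u ∈ A' := Algebra.self_mem_adjoin_singleton _ _
  have hamem : th m a * u ∈ A' := by
    refine mul_mem ?_ humem
    exact A'.algebraMap_mem a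
  set α : A' := ⟨th m a * u, hamem⟩ with hα
  set β : A' := algebraMap (FF m) A' b with hβ
  have hx : IsIntegral A' (xv m 0) := by
    refine ⟨Polynomial.X ^ 2 + (Polynomial.C α * Polynomial.X + Polynomial.C β), ?_, ?_⟩
    · refine Polynomial.monic_X_pow_add ?_
      exact lt_of_le_of_lt (Polynomial.degree_linear_le) (by norm_num)
    · rw [Polynomial.eval₂_add, Polynomial.eval₂_add, Polynomial.eval₂_pow,
        Polynomial.eval₂_mul, Polynomial.eval₂_X, Polynomial.eval₂_C, Polynomial.eval₂_C]
      have hcα : algebraMap A' (KK m) α = th m a * u := rfl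
      have hcβ : algebraMap A' (KK m) β = th m b := by
        rw [hβ, ← IsScalarTower.algebraMap_apply]
        rfl
      rw [hcα, hcβ]
      calc xv m 0 ^ 2 + (th m a * u * xv m 0 + th m b)
          = xv m 0 ^ 2 + th m a * u * xv m 0 + th m b := by ring
        _ = 0 := hrel
  have : IsIntegral (FF m) (xv m 0) := isIntegral_trans (xv m 0) hx
  exact transcendental_xv0 this.isAlgebraic
lemma finsupp_classify {n : ℕ} {d : Fin n →₀ ℕ} (h : (d.sum fun _ e => e) ≤ 1) :
    d = 0 ∨ ∃ i, d = Finsupp.single i 1 := by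
  rcases Nat.le_one_iff_eq_zero_or_eq_one.mp h with h0 | h1
  · left
    ext i
    by_cases hi : i ∈ d.support
    · exact Finset.sum_eq_zero_iff.mp (by rwa [Finsupp.sum] at h0) i hi
    · simpa using Finsupp.notMem_support_iff.mp hi
  · right
    rw [Finsupp.sum] at h1
    have hne : d.support.Nonempty := by
      by_contra hcon
      rw [Finset.not_nonempty_iff_eq_empty] at hcon
      rw [hcon] at h1
      simp at h1
    obtain ⟨i, hi⟩ := hne
    refine ⟨i, ?_⟩
    have hsplit : d i + ∑ j ∈ d.support.erase i, d j = 1 := by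
      rw [Finset.add_sum_erase _ _ hi]
      exact h1
    have hdi : d i ≠ 0 := Finsupp.mem_support_iff.mp hi
    have hdi1 : d i = 1 := by omega
    have hrest : ∑ j ∈ d.support.erase i, d j = 0 := by omega
    have hz : ∀ j ∈ d.support.erase i, d j = 0 := Finset.sum_eq_zero_iff.mp hrest
    rw [Finsupp.eq_single_iff]
    refine ⟨?_, hdi1⟩
    intro j hj
    rw [Finset.mem_singleton]
    by_contra hji
    exact Finsupp.mem_support_iff.mp hj (hz j (Finset.mem_erase.mpr ⟨hji, hj⟩))

lemma linear_decomp {n : ℕ} (f : MvPolynomial (Fin n) ℂ) (hf : f.totalDegree ≤ 1) :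
    f = C (f.coeff 0) + ∑ i, C (f.coeff (Finsupp.single i 1)) * X i := by
  classical
  apply MvPolynomial.ext
  intro d
  rw [coeff_add, coeff_C, coeff_sum]
  simp only [coeff_C_mul, coeff_X']
  by_cases hd0 : d = 0
  · subst hd0
    have : ∀ i : Fin n, ¬ (Finsupp.single i 1 = 0) := by
      intro i h
      exact one_ne_zero (Finsupp.single_eq_zero.mp h)
    simp [this]
  · by_cases hd1 : ∃ i, d = Finsupp.single i 1
    · obtain ⟨i, rfl⟩ := hd1
      have h1 : ¬ ((0 : Fin n →₀ ℕ) = Finsupp.single i 1) := by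
        intro h
        exact one_ne_zero (Finsupp.single_eq_zero.mp h.symm)
      have h2 : ∀ j : Fin n, (Finsupp.single j 1 = Finsupp.single i 1) ↔ j = i :=
        fun j => Finsupp.single_left_inj one_ne_zero
      simp only [h1, if_false, h2, mul_ite, mul_one, mul_zero]
      rw [Finset.sum_ite_eq' Finset.univ i (fun j => f.coeff (Finsupp.single j 1))]
      simp
    · push_neg at hd1
      have hdf : f.coeff d = 0 := by
        by_contra hcon
        have hmem : d ∈ f.support := mem_support_iff.mpr hcon
        have hle := le_trans (le_totalDegree hmem) hf
        rcases finsupp_classify hle with h0 | ⟨i, hi⟩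
        · exact hd0 h0
        · exact hd1 i hi
      have h1 : ¬ ((0 : Fin n →₀ ℕ) = d) := fun h => hd0 h.symm
      have h2 : ∀ j : Fin n, ¬ (Finsupp.single j 1 = d) := fun j h => hd1 j h.symm
      rw [hdf]
      simp [h1, h2]

lemma exists_lin_coeff {n : ℕ} (f : MvPolynomial (Fin n) ℂ) (hf : f.totalDegree = 1) :
    ∃ i, f.coeff (Finsupp.single i 1) ≠ 0 := by
  by_contra hcon
  push_neg at hcon
  have hdec := linear_decomp f hf.le
  rw [show (∑ i, C (f.coeff (Finsupp.single i 1)) * X i : MvPolynomial (Fin n) ℂ) = 0 by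
    apply Finset.sum_eq_zero; intro i _; rw [hcon i, map_zero, zero_mul]] at hdec
  rw [add_zero] at hdec
  rw [hdec, totalDegree_C] at hf
  exact zero_ne_one hf

lemma alg_decomp {m : ℕ} (f : MvA m) (hf : f.totalDegree ≤ 1) :
    algebraMap (MvA m) (KK m) f
      = sc m (f.coeff 0) + ∑ i, sc m (f.coeff (Finsupp.single i 1)) * xv m i := by
  conv_lhs => rw [linear_decomp f hf]
  rw [map_add, map_sum]
  simp only [map_mul]
  rfl
end

end Stmt10Aux

open Stmt10Aux in
/-- For any two linear polynomials `f, g` in `n ≥ 1` variables over `ℂ`, the set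
`{√f, √g}` is rationalizable: some endomorphism `φ` of `Q = ℂ(x₁,…,x_n)` makes both
`φ(f)` and `φ(g)` squares in `Q`. -/
theorem stmt10 {n : ℕ} (hn : 1 ≤ n) (f g : MvPolynomial (Fin n) ℂ)
    (hf : f.totalDegree = 1) (hg : g.totalDegree = 1) :
    ∃ φ : FractionRing (MvPolynomial (Fin n) ℂ) →+* FractionRing (MvPolynomial (Fin n) ℂ),
      (∃ h, φ (algebraMap (MvPolynomial (Fin n) ℂ) (FractionRing (MvPolynomial (Fin n) ℂ)) f)
        = h ^ 2) ∧
      (∃ h, φ (algebraMap (MvPolynomial (Fin n) ℂ) (FractionRing (MvPolynomial (Fin n) ℂ)) g)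
        = h ^ 2) := by
  obtain ⟨m, rfl⟩ : ∃ m, n = m + 1 := ⟨n - 1, by omega⟩
  classical
  set a0 := f.coeff 0 with ha0
  set b0 := g.coeff 0 with hb0
  set a : Fin (m+1) → ℂ := fun i => f.coeff (Finsupp.single i 1) with ha
  set b : Fin (m+1) → ℂ := fun i => g.coeff (Finsupp.single i 1) with hb
  obtain ⟨i₀, hi₀⟩ : ∃ i, a i ≠ 0 := exists_lin_coeff f hf
  set lam := b i₀ / a i₀ with hlam_def
  have hbi₀ : b i₀ = lam * a i₀ := by
    rw [hlam_def, div_mul_cancel₀ _ hi₀]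
  have himf : algebraMap (MvA m) (KK m) f = sc m a0 + ∑ i, sc m (a i) * xv m i :=
    alg_decomp f hf.le
  have himg : algebraMap (MvA m) (KK m) g = sc m b0 + ∑ i, sc m (b i) * xv m i :=
    alg_decomp g hg.le
  by_cases hd : ∀ i, b i = lam * a i
  · -- CASE II : g is proportional to f modulo constants; use the conic substitution
    have hlam : lam ≠ 0 := by
      intro h0
      obtain ⟨j, hj⟩ := exists_lin_coeff g hg
      exact hj (by rw [show g.coeff (Finsupp.single j 1) = b j from rfl, hd j, h0, zero_mul])
    obtain ⟨φ₁, hφ₁c, hφ₁x⟩ := ren_exists (m := m) (Equiv.swap 0 i₀)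
    set σ := Equiv.swap (0 : Fin (m+1)) i₀ with hσ
    have hσi₀ : σ i₀ = 0 := Equiv.swap_apply_right 0 i₀
    have hσne : ∀ i, i ≠ i₀ → σ i ≠ 0 := fun i hii hcon =>
      hii (σ.injective (hcon.trans hσi₀.symm))
    set Wf := sc m a0 + ∑ i ∈ Finset.univ.erase i₀, sc m (a i) * xv m (σ i) with hWf
    set Wg := sc m b0 + ∑ i ∈ Finset.univ.erase i₀, sc m (b i) * xv m (σ i) with hWg
    have hWfmem : Wf ∈ (th m).fieldRange := by
      refine add_mem (sc_mem_range _) (Subfield.sum_mem _ ?_)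
      intro i hi
      exact mul_mem (sc_mem_range _) (xv_mem_range (hσne i (Finset.mem_erase.mp hi).1))
    have hWgmem : Wg ∈ (th m).fieldRange := by
      refine add_mem (sc_mem_range _) (Subfield.sum_mem _ ?_)
      intro i hi
      exact mul_mem (sc_mem_range _) (xv_mem_range (hσne i (Finset.mem_erase.mp hi).1))
    have him1f : φ₁ (algebraMap (MvA m) (KK m) f) = sc m (a i₀) * xv m 0 + Wf := by
      rw [himf, map_add, map_sum]
      simp only [map_mul, hφ₁c, hφ₁x]
      rw [← Finset.add_sum_erase _ (fun i => sc m (a i) * xv m (σ i)) (Finset.mem_univ i₀),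
        hσi₀, hWf]
      ring
    have him1g : φ₁ (algebraMap (MvA m) (KK m) g) = sc m (b i₀) * xv m 0 + Wg := by
      rw [himg, map_add, map_sum]
      simp only [map_mul, hφ₁c, hφ₁x]
      rw [← Finset.add_sum_erase _ (fun i => sc m (b i) * xv m (σ i)) (Finset.mem_univ i₀),
        hσi₀, hWg]
      ring
    set u₁ := (xv m 0 - Wf) * (sc m (a i₀))⁻¹ with hu₁
    have hscai₀ : sc m (a i₀) ≠ 0 := sc_ne_zero hi₀
    have htu₁ : Transcendental (FF m) u₁ := by
      have hrw : u₁ = (sc m (a i₀))⁻¹ * xv m 0 + (-Wf * (sc m (a i₀))⁻¹) := by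
        rw [hu₁]; ring
      rw [hrw]
      exact trans_lin _ _ (inv_mem (sc_mem_range _))
        (mul_mem (neg_mem hWfmem) (inv_mem (sc_mem_range _))) (inv_ne_zero hscai₀)
    obtain ⟨φ₂, hφ₂c, hφ₂0, hφ₂x, hφ₂fix⟩ := sub_exists u₁ htu₁
    have hkey : sc m (a i₀) * u₁ + Wf = xv m 0 := by
      rw [hu₁]
      field_simp
      ring
    have him2f : φ₂ (φ₁ (algebraMap (MvA m) (KK m) f)) = xv m 0 := by
      rw [him1f, map_add, map_mul, hφ₂c, hφ₂0, hφ₂fix Wf hWfmem, hkey]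
    set c0 := b0 - lam * a0 with hc0
    have hWgrel : Wg = sc m lam * Wf + sc m c0 := by
      rw [hWg, hWf, hc0, map_sub, map_mul]
      have hterm : ∀ i ∈ Finset.univ.erase i₀,
          sc m (b i) * xv m (σ i) = sc m lam * (sc m (a i) * xv m (σ i)) := by
        intro i _
        rw [hd i, map_mul]; ring
      rw [Finset.sum_congr rfl hterm, ← Finset.mul_sum]
      ring
    have him2g : φ₂ (φ₁ (algebraMap (MvA m) (KK m) g))
        = sc m lam * xv m 0 + sc m c0 := by
      rw [him1g, map_add, map_mul, hφ₂c, hφ₂0, hφ₂fix Wg hWgmem, hWgrel, hbi₀, map_mul]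
      calc sc m lam * sc m (a i₀) * u₁ + (sc m lam * Wf + sc m c0)
          = sc m lam * (sc m (a i₀) * u₁ + Wf) + sc m c0 := by ring
        _ = _ := by rw [hkey]
    obtain ⟨μ, hμ⟩ := IsAlgClosed.exists_pow_nat_eq lam (n := 2) (by norm_num)
    obtain ⟨ν, hν⟩ := IsAlgClosed.exists_pow_nat_eq c0 (n := 2) (by norm_num)
    have hμ0 : μ ≠ 0 := by
      intro h
      apply hlam
      rw [← hμ, h]; ring
    set uc := (sc m (ν^2) * (xv m 0)⁻¹ - xv m 0) * (sc m (2*μ))⁻¹ with huc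
    have hx0 := xv_ne_zero (m := m) 0
    have hsc2μ : sc m (2*μ) ≠ 0 := sc_ne_zero (mul_ne_zero two_ne_zero hμ0)
    have hsc2 : sc m 2 ≠ 0 := sc_ne_zero two_ne_zero
    have hscμ : sc m μ ≠ 0 := sc_ne_zero hμ0
    have hrel : xv m 0 ^ 2 + sc m (2*μ) * uc * xv m 0 + sc m (-(ν^2)) = 0 := by
      rw [map_neg, huc]
      field_simp [hx0, hsc2, hscμ]
      ring
    have htc : Transcendental (FF m) uc :=
      trans_conic _ _ _ (sc_mem_range _) (sc_mem_range _) hrel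
    have ht2 : Transcendental (FF m) (uc ^ 2) := htc.pow (by norm_num)
    obtain ⟨φ₃, hφ₃c, hφ₃0, hφ₃x, hφ₃fix⟩ := sub_exists _ ht2
    refine ⟨φ₃.comp (φ₂.comp φ₁), ⟨uc, ?_⟩,
      ⟨(xv m 0 + sc m (ν^2) * (xv m 0)⁻¹) * (2 : KK m)⁻¹, ?_⟩⟩
    · rw [RingHom.comp_apply, RingHom.comp_apply, him2f, hφ₃0]
    · rw [RingHom.comp_apply, RingHom.comp_apply, him2g, map_add, map_mul, hφ₃c, hφ₃0, hφ₃c]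
      have hsclam : sc m lam = sc m μ * sc m μ := by
        rw [← map_mul, ← hμ]; ring_nf
      have hscc0 : sc m c0 = sc m ν * sc m ν := by
        rw [← map_mul, ← hν]; ring_nf
      have hscν2 : sc m (ν^2) = sc m ν * sc m ν := by
        rw [← map_mul]; ring_nf
      have hsc2μ' : sc m (2*μ) = sc m 2 * sc m μ := by rw [map_mul]
      have h2 : sc m 2 = (2 : KK m) := map_ofNat _ 2
      have h2ne : (2 : KK m) ≠ 0 := h2 ▸ hsc2
      rw [huc, hsclam, hscc0, hscν2, hsc2μ', h2]
      field_simp [hx0, hscμ, h2ne]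
      ring
  · -- CASE I : two independent directions
    push_neg at hd
    obtain ⟨j, hdj⟩ := hd
    have hji₀ : j ≠ i₀ := fun h => hdj (h ▸ hbi₀)
    have h10 : (1 : Fin (m+1)) ≠ 0 := by
      intro h1
      have hm : m = 0 := by
        have := Fin.one_eq_zero_iff.mp h1
        omega
      subst hm
      have hb1 := j.isLt
      have hb2 := i₀.isLt
      exact hji₀ (Fin.ext (by omega))
    set τ := Equiv.swap (0 : Fin (m+1)) i₀ with hτdef
    set j' := τ j with hj'def
    have hj'0 : j' ≠ 0 := fun h =>
      hji₀ (τ.injective (h.trans (Equiv.swap_apply_right 0 i₀).symm))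
    set σ := τ.trans (Equiv.swap 1 j') with hσdef
    have hσi₀ : σ i₀ = 0 := by
      simp only [hσdef, Equiv.trans_apply, hτdef, Equiv.swap_apply_right]
      exact Equiv.swap_apply_of_ne_of_ne (Ne.symm h10) (Ne.symm hj'0)
    have hσj : σ j = 1 := by
      simp only [hσdef, Equiv.trans_apply, ← hj'def, Equiv.swap_apply_right]
    have hσne : ∀ i, i ≠ i₀ → σ i ≠ 0 := fun i hii hcon =>
      hii (σ.injective (hcon.trans hσi₀.symm))
    have hσne1 : ∀ i, i ≠ j → σ i ≠ 1 := fun i hij hcon =>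
      hij (σ.injective (hcon.trans hσj.symm))
    obtain ⟨φ₁, hφ₁c, hφ₁x⟩ := ren_exists (m := m) σ
    set Wf := sc m a0 + ∑ i ∈ Finset.univ.erase i₀, sc m (a i) * xv m (σ i) with hWf
    set Wg := sc m b0 + ∑ i ∈ Finset.univ.erase i₀, sc m (b i) * xv m (σ i) with hWg
    have hWfmem : Wf ∈ (th m).fieldRange := by
      refine add_mem (sc_mem_range _) (Subfield.sum_mem _ ?_)
      intro i hi
      exact mul_mem (sc_mem_range _) (xv_mem_range (hσne i (Finset.mem_erase.mp hi).1))
    have hWgmem : Wg ∈ (th m).fieldRange := by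
      refine add_mem (sc_mem_range _) (Subfield.sum_mem _ ?_)
      intro i hi
      exact mul_mem (sc_mem_range _) (xv_mem_range (hσne i (Finset.mem_erase.mp hi).1))
    have him1f : φ₁ (algebraMap (MvA m) (KK m) f) = sc m (a i₀) * xv m 0 + Wf := by
      rw [himf, map_add, map_sum]
      simp only [map_mul, hφ₁c, hφ₁x]
      rw [← Finset.add_sum_erase _ (fun i => sc m (a i) * xv m (σ i)) (Finset.mem_univ i₀),
        hσi₀, hWf]
      ring
    have him1g : φ₁ (algebraMap (MvA m) (KK m) g) = sc m (b i₀) * xv m 0 + Wg := by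
      rw [himg, map_add, map_sum]
      simp only [map_mul, hφ₁c, hφ₁x]
      rw [← Finset.add_sum_erase _ (fun i => sc m (b i) * xv m (σ i)) (Finset.mem_univ i₀),
        hσi₀, hWg]
      ring
    set u₁ := (xv m 0 - Wf) * (sc m (a i₀))⁻¹ with hu₁
    have hscai₀ : sc m (a i₀) ≠ 0 := sc_ne_zero hi₀
    have htu₁ : Transcendental (FF m) u₁ := by
      have hrw : u₁ = (sc m (a i₀))⁻¹ * xv m 0 + (-Wf * (sc m (a i₀))⁻¹) := by
        rw [hu₁]; ring
      rw [hrw]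
      exact trans_lin _ _ (inv_mem (sc_mem_range _))
        (mul_mem (neg_mem hWfmem) (inv_mem (sc_mem_range _))) (inv_ne_zero hscai₀)
    obtain ⟨φ₂, hφ₂c, hφ₂0, hφ₂x, hφ₂fix⟩ := sub_exists u₁ htu₁
    have hkey : sc m (a i₀) * u₁ + Wf = xv m 0 := by
      rw [hu₁]
      field_simp
      ring
    have him2f : φ₂ (φ₁ (algebraMap (MvA m) (KK m) f)) = xv m 0 := by
      rw [him1f, map_add, map_mul, hφ₂c, hφ₂0, hφ₂fix Wf hWfmem, hkey]
    set dcoef : Fin (m+1) → ℂ := fun i => b i - lam * a i with hdcoef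
    set c0 := b0 - lam * a0 with hc0
    have hWg' : Wg - sc m lam * Wf
        = sc m c0 + ∑ i ∈ Finset.univ.erase i₀, sc m (dcoef i) * xv m (σ i) := by
      have hterm : ∀ i ∈ Finset.univ.erase i₀,
          sc m (dcoef i) * xv m (σ i)
            = sc m (b i) * xv m (σ i) - sc m lam * (sc m (a i) * xv m (σ i)) := by
        intro i _
        rw [show dcoef i = b i - lam * a i from rfl, map_sub, map_mul]
        ring
      rw [Finset.sum_congr rfl hterm, Finset.sum_sub_distrib, ← Finset.mul_sum, hWg, hWf,
        hc0, map_sub, map_mul]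
      ring
    have him2g : φ₂ (φ₁ (algebraMap (MvA m) (KK m) g))
        = sc m lam * xv m 0
          + (sc m c0 + ∑ i ∈ Finset.univ.erase i₀, sc m (dcoef i) * xv m (σ i)) := by
      rw [him1g, map_add, map_mul, hφ₂c, hφ₂0, hφ₂fix Wg hWgmem]
      have hsplit : sc m (b i₀) * u₁ + Wg
          = sc m lam * (sc m (a i₀) * u₁ + Wf) + (Wg - sc m lam * Wf) := by
        rw [hbi₀, map_mul]; ring
      rw [hsplit, hkey, hWg']
    obtain ⟨φ₃, hφ₃c, hφ₃x⟩ := ren_exists (m := m) (Equiv.swap 0 1)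
    have him3f : φ₃ (φ₂ (φ₁ (algebraMap (MvA m) (KK m) f))) = xv m 1 := by
      rw [him2f, hφ₃x, Equiv.swap_apply_left]
    have hjmem : j ∈ Finset.univ.erase i₀ := Finset.mem_erase.mpr ⟨hji₀, Finset.mem_univ j⟩
    set W₃ := sc m lam * xv m 1 + sc m c0
        + ∑ i ∈ (Finset.univ.erase i₀).erase j,
            sc m (dcoef i) * xv m (Equiv.swap 0 1 (σ i)) with hW₃
    have him3g : φ₃ (φ₂ (φ₁ (algebraMap (MvA m) (KK m) g)))
        = sc m (dcoef j) * xv m 0 + W₃ := by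
      rw [him2g, map_add, map_mul, hφ₃c, hφ₃x, map_add, hφ₃c, map_sum]
      simp only [map_mul, hφ₃c, hφ₃x]
      rw [Equiv.swap_apply_left,
        ← Finset.add_sum_erase _ (fun i => sc m (dcoef i) * xv m (Equiv.swap 0 1 (σ i))) hjmem,
        hσj, Equiv.swap_apply_right, hW₃]
      ring
    have hW₃mem : W₃ ∈ (th m).fieldRange := by
      refine add_mem (add_mem (mul_mem (sc_mem_range _) (xv_mem_range h10))
        (sc_mem_range _)) (Subfield.sum_mem _ ?_)
      intro i hi
      obtain ⟨hij, hii₀mem⟩ := Finset.mem_erase.mp hi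
      have hii₀ : i ≠ i₀ := (Finset.mem_erase.mp hii₀mem).1
      refine mul_mem (sc_mem_range _) (xv_mem_range ?_)
      intro hcon
      exact hσne1 i hij
        ((Equiv.swap 0 1).injective (hcon.trans (Equiv.swap_apply_right 0 1).symm))
    have hdj' : dcoef j ≠ 0 := sub_ne_zero_of_ne hdj
    set u₃ := (xv m 0 ^ 2 - W₃) * (sc m (dcoef j))⁻¹ with hu₃
    have htu₃ : Transcendental (FF m) u₃ := by
      have hrw : u₃ = (sc m (dcoef j))⁻¹ * xv m 0 ^ 2 + 0 * xv m 0
          + (-W₃ * (sc m (dcoef j))⁻¹) := by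
        rw [hu₃]; ring
      rw [hrw]
      exact trans_quad _ _ _ (inv_mem (sc_mem_range _)) (zero_mem _)
        (mul_mem (neg_mem hW₃mem) (inv_mem (sc_mem_range _)))
        (inv_ne_zero (sc_ne_zero hdj'))
    obtain ⟨φ₄, hφ₄c, hφ₄0, hφ₄x, hφ₄fix⟩ := sub_exists u₃ htu₃
    have him4f : φ₄ (φ₃ (φ₂ (φ₁ (algebraMap (MvA m) (KK m) f)))) = xv m 1 := by
      rw [him3f, hφ₄x 1 h10]
    have him4g : φ₄ (φ₃ (φ₂ (φ₁ (algebraMap (MvA m) (KK m) g)))) = xv m 0 ^ 2 := by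
      rw [him3g, map_add, map_mul, hφ₄c, hφ₄0, hφ₄fix W₃ hW₃mem, hu₃]
      field_simp [sc_ne_zero hdj']
      ring
    obtain ⟨φ₅, hφ₅c, hφ₅x⟩ := ren_exists (m := m) (Equiv.swap 0 1)
    have him5f : φ₅ (φ₄ (φ₃ (φ₂ (φ₁ (algebraMap (MvA m) (KK m) f))))) = xv m 0 := by
      rw [him4f, hφ₅x, Equiv.swap_apply_right]
    have him5g : φ₅ (φ₄ (φ₃ (φ₂ (φ₁ (algebraMap (MvA m) (KK m) g))))) = xv m 1 ^ 2 := by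
      rw [him4g, map_pow, hφ₅x, Equiv.swap_apply_left]
    have htq : Transcendental (FF m) (xv m 0 ^ 2) := transcendental_xv0.pow (by norm_num)
    obtain ⟨φ₆, hφ₆c, hφ₆0, hφ₆x, hφ₆fix⟩ := sub_exists _ htq
    have him6f : φ₆ (φ₅ (φ₄ (φ₃ (φ₂ (φ₁ (algebraMap (MvA m) (KK m) f))))))
        = xv m 0 ^ 2 := by
      rw [him5f, hφ₆0]
    have him6g : φ₆ (φ₅ (φ₄ (φ₃ (φ₂ (φ₁ (algebraMap (MvA m) (KK m) g))))))
        = xv m 1 ^ 2 := by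
      rw [him5g, map_pow, hφ₆x 1 h10]
    refine ⟨φ₆.comp (φ₅.comp (φ₄.comp (φ₃.comp (φ₂.comp φ₁)))), ⟨xv m 0, ?_⟩,
      ⟨xv m 1, ?_⟩⟩
    · rw [RingHom.comp_apply, RingHom.comp_apply, RingHom.comp_apply, RingHom.comp_apply,
        RingHom.comp_apply]
      exact him6f
    · rw [RingHom.comp_apply, RingHom.comp_apply, RingHom.comp_apply, RingHom.comp_apply,
        RingHom.comp_apply]
      exact him6g
end

section
/- Let a₁,…,a_m ∈ ℂ be pairwise distinct and let Q = ℂ(x). The set {√(x−a₁),…,√(x−a_m)} is rationalizable (i.e. there is a ℂ-algebra endomorphism φ of ℂ(x) making every φ(x−aᵢ) a square in ℂ(x)) if and only if m ≤ 2. -/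
open Polynomial

lemma aux_sq_of_associated {w d : Polynomial ℂ} (h : Associated (d ^ 2) w) :
    ∃ s : Polynomial ℂ, w = s ^ 2 := by
  obtain ⟨u, hu⟩ := h
  obtain ⟨k, hk, hCk⟩ := Polynomial.isUnit_iff.mp u.isUnit
  obtain ⟨e, he⟩ := IsAlgClosed.exists_pow_nat_eq (k := ℂ) k zero_lt_two
  refine ⟨d * C e, ?_⟩
  rw [← hu, ← hCk, mul_pow, ← map_pow, he]

lemma aux_coprime_of_comb {A B X Y : Polynomial ℂ} (h : IsCoprime X Y)
    {e1 e2 e3 e4 : ℂ} (hX : X = C e1 * A + C e2 * B) (hY : Y = C e3 * A + C e4 * B) :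
    IsCoprime A B := by
  obtain ⟨x, y, hxy⟩ := h
  refine ⟨x * C e1 + y * C e3, x * C e2 + y * C e4, ?_⟩
  rw [hX, hY] at hxy
  linear_combination hxy

lemma aux_comb_eq {a1 a2 c0 d0 c1 d1 e f : ℂ}
    (h1 : a1 * c0 + a2 * c1 = e) (h2 : a1 * d0 + a2 * d1 = f) (p q : Polynomial ℂ) :
    C e * p + C f * q = C a1 * (C c0 * p + C d0 * q) + C a2 * (C c1 * p + C d1 * q) := by
  have h1' : (C (a1 * c0 + a2 * c1) : Polynomial ℂ) = C e := by rw [h1]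
  have h2' : (C (a1 * d0 + a2 * d1) : Polynomial ℂ) = C f := by rw [h2]
  simp only [map_add, map_mul] at h1' h2'
  linear_combination p * h1'.symm + q * h2'.symm

/-- Split a square `C α * u0^2 + C β * u1^2` (with `u0, u1` coprime, `α β ≠ 0`)
into two squares `u0 ± C ρ * u1` where `ρ ^ 2 = -(α⁻¹ * β)`. -/
lemma aux_split {u0 u1 v : Polynomial ℂ} (hu : IsCoprime u0 u1) {α β ρ : ℂ}
    (hα : α ≠ 0) (hρ0 : ρ ≠ 0) (hρ : ρ ^ 2 = -(α⁻¹ * β))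
    (hv : C α * u0 ^ 2 + C β * u1 ^ 2 = v ^ 2) :
    (∃ s, u0 - C ρ * u1 = s ^ 2) ∧ ∃ s, u0 + C ρ * u1 = s ^ 2 := by
  obtain ⟨e, he⟩ := IsAlgClosed.exists_pow_nat_eq (k := ℂ) α⁻¹ zero_lt_two
  have h1' : (C α⁻¹ : Polynomial ℂ) * C α = 1 := by
    rw [← map_mul, inv_mul_cancel₀ hα, map_one]
  have h2' : (C α⁻¹ : Polynomial ℂ) * C β = -(C ρ ^ 2) := by
    rw [← map_pow, ← map_neg, ← map_mul]
    congr 1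
    rw [hρ, neg_neg]
  have he2 : (C e : Polynomial ℂ) ^ 2 = C α⁻¹ := by rw [← map_pow, he]
  have key : (u0 - C ρ * u1) * (u0 + C ρ * u1) = (C e * v) ^ 2 := by
    rw [mul_pow, he2, ← hv]
    linear_combination (u0 ^ 2) * h1'.symm + (u1 ^ 2) * h2'.symm
  have hAB : IsCoprime (u0 - C ρ * u1) (u0 + C ρ * u1) := by
    refine aux_coprime_of_comb hu (e1 := 2⁻¹) (e2 := 2⁻¹)
      (e3 := -(2 * ρ)⁻¹) (e4 := (2 * ρ)⁻¹) ?_ ?_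
    · have h : (C (2⁻¹ : ℂ) : Polynomial ℂ) * 2 = 1 := by
        have h2 : ((2 : Polynomial ℂ)) = C (2 : ℂ) := by
          rw [← map_ofNat (C : ℂ →+* Polynomial ℂ) 2]
        rw [h2, ← map_mul, inv_mul_cancel₀ (two_ne_zero), map_one]
      linear_combination (-u0) * h
    · have h : (C ((2 * ρ)⁻¹ : ℂ) : Polynomial ℂ) * (2 * C ρ) = 1 := by
        have h2 : ((2 : Polynomial ℂ)) = C (2 : ℂ) := by
          rw [← map_ofNat (C : ℂ →+* Polynomial ℂ) 2]
        rw [h2, ← map_mul, ← map_mul, inv_mul_cancel₀ (by simpa using hρ0), map_one]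
      simp only [map_neg]
      linear_combination (-u1) * h
  constructor
  · obtain ⟨dd, hdd⟩ := exists_associated_pow_of_mul_eq_pow' hAB key
    exact aux_sq_of_associated hdd
  · obtain ⟨dd, hdd⟩ := exists_associated_pow_of_mul_eq_pow' hAB.symm
      (by rw [mul_comm] at key; exact key)
    exact aux_sq_of_associated hdd

/-- **Key descent lemma.** If `p, q` are coprime and four pairwise non-proportional
linear combinations `C (c i) * p + C (d i) * q` are all squares, then `p, q` are constants. -/

lemma aux_pairs {ρ σ : ℂ} (hρ0 : ρ ≠ 0) (hσ0 : σ ≠ 0) (hρσ : ρ ^ 2 ≠ σ ^ 2) :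
    ∀ i j : Fin 4, i ≠ j →
      (![1,1,1,1] : Fin 4 → ℂ) i * (![-ρ,ρ,-σ,σ] : Fin 4 → ℂ) j ≠
      (![1,1,1,1] : Fin 4 → ℂ) j * (![-ρ,ρ,-σ,σ] : Fin 4 → ℂ) i := by
  have h1 : ρ ≠ σ := fun h => hρσ (by rw [h])
  have h2 : ρ ≠ -σ := fun h => hρσ (by rw [h]; ring)
  have h3 : σ ≠ -ρ := fun h => hρσ (by rw [h]; ring)
  have h4 : ρ ≠ -ρ := fun h => hρ0 (by
    have : (2 : ℂ) * ρ = 0 := by linear_combination h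
    simpa using this)
  have h5 : σ ≠ -σ := fun h => hσ0 (by
    have : (2 : ℂ) * σ = 0 := by linear_combination h
    simpa using this)
  intro i j hij
  fin_cases i <;> fin_cases j <;>
    simp_all [eq_comm, neg_eq_iff_eq_neg]

lemma aux_new_sq {u0 u1 : Polynomial ℂ} {ρ σ : ℂ} {s1 s2 s3 s4 : Polynomial ℂ}
    (hs1 : u0 - C ρ * u1 = s1 ^ 2) (hs2 : u0 + C ρ * u1 = s2 ^ 2)
    (hs3 : u0 - C σ * u1 = s3 ^ 2) (hs4 : u0 + C σ * u1 = s4 ^ 2) :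
    ∀ i : Fin 4, ∃ v, C ((![1,1,1,1] : Fin 4 → ℂ) i) * u0 +
      C ((![-ρ,ρ,-σ,σ] : Fin 4 → ℂ) i) * u1 = v ^ 2 := by
  intro i
  fin_cases i
  · refine ⟨s1, ?_⟩
    simp
    linear_combination hs1
  · refine ⟨s2, ?_⟩
    simp
    linear_combination hs2
  · refine ⟨s3, ?_⟩
    simp
    linear_combination hs3
  · refine ⟨s4, ?_⟩
    simp
    linear_combination hs4

/-- **Key descent lemma.** If `p, q` are coprime and four pairwise non-proportional
linear combinations `C (c i) * p + C (d i) * q` are all squares, then `p, q` are constants. -/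
lemma aux_no_four_squares (N : ℕ) : ∀ p q : Polynomial ℂ, IsCoprime p q →
    max p.natDegree q.natDegree = N →
    ∀ c d : Fin 4 → ℂ,
    (∀ i j : Fin 4, i ≠ j → c i * d j ≠ c j * d i) →
    (∀ i, ∃ v, C (c i) * p + C (d i) * q = v ^ 2) →
    p.natDegree = 0 ∧ q.natDegree = 0 := by
  induction N using Nat.strong_induction_on with
  | _ N IH =>
  intro p q hpq hN c d hcd hsq
  rcases Nat.eq_zero_or_pos N with hN0 | hNpos
  · subst hN0
    exact ⟨Nat.le_zero.mp (hN ▸ le_max_left _ _), Nat.le_zero.mp (hN ▸ le_max_right _ _)⟩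
  exfalso
  obtain ⟨u0, hu0⟩ := hsq 0
  obtain ⟨u1, hu1⟩ := hsq 1
  obtain ⟨v2, hv2⟩ := hsq 2
  obtain ⟨v3, hv3⟩ := hsq 3
  set det : ℂ := c 0 * d 1 - c 1 * d 0 with hdet_def
  have hdet : det ≠ 0 := sub_ne_zero.mpr (hcd 0 1 (by decide))
  -- p and q as combinations of the two squares u0^2, u1^2
  have hp_comb : p = C (d 1 / det) * u0 ^ 2 + C (-(d 0) / det) * u1 ^ 2 := by
    have := aux_comb_eq (a1 := d 1 / det) (a2 := -(d 0) / det)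
      (c0 := c 0) (d0 := d 0) (c1 := c 1) (d1 := d 1) (e := 1) (f := 0)
      (by field_simp; ring) (by field_simp; ring) p q
    rw [hu0, hu1] at this
    simpa using this
  have hq_comb : q = C (-(c 1) / det) * u0 ^ 2 + C (c 0 / det) * u1 ^ 2 := by
    have := aux_comb_eq (a1 := -(c 1) / det) (a2 := c 0 / det)
      (c0 := c 0) (d0 := d 0) (c1 := c 1) (d1 := d 1) (e := 0) (f := 1)
      (by field_simp; ring) (by field_simp; ring) p q
    rw [hu0, hu1] at this
    simpa using this
  -- coprimality of u0, u1
  have hu01sq : IsCoprime (u0 ^ 2) (u1 ^ 2) := aux_coprime_of_comb hpq hp_comb hq_comb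
  have hu01 : IsCoprime u0 u1 :=
    (hu01sq.of_isCoprime_of_dvd_left (dvd_pow_self u0 two_ne_zero)).of_isCoprime_of_dvd_right
      (dvd_pow_self u1 two_ne_zero)
  -- express the other two squares in the basis u0^2, u1^2
  set α : ℂ := (c 2 * d 1 - c 1 * d 2) / det with hα_def
  set β : ℂ := (c 0 * d 2 - c 2 * d 0) / det with hβ_def
  set γ : ℂ := (c 3 * d 1 - c 1 * d 3) / det with hγ_def
  set δ : ℂ := (c 0 * d 3 - c 3 * d 0) / det with hδ_def
  have hα : α ≠ 0 := div_ne_zero (sub_ne_zero.mpr (hcd 2 1 (by decide))) hdet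
  have hβ : β ≠ 0 := div_ne_zero (sub_ne_zero.mpr (hcd 0 2 (by decide))) hdet
  have hγ : γ ≠ 0 := div_ne_zero (sub_ne_zero.mpr (hcd 3 1 (by decide))) hdet
  have hδ : δ ≠ 0 := div_ne_zero (sub_ne_zero.mpr (hcd 0 3 (by decide))) hdet
  have hv2' : C α * u0 ^ 2 + C β * u1 ^ 2 = v2 ^ 2 := by
    have := aux_comb_eq (a1 := α) (a2 := β)
      (c0 := c 0) (d0 := d 0) (c1 := c 1) (d1 := d 1) (e := c 2) (f := d 2)
      (by rw [hα_def, hβ_def]; field_simp; ring) (by rw [hα_def, hβ_def]; field_simp; ring) p q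
    rw [hu0, hu1] at this
    rw [← this, hv2]
  have hv3' : C γ * u0 ^ 2 + C δ * u1 ^ 2 = v3 ^ 2 := by
    have := aux_comb_eq (a1 := γ) (a2 := δ)
      (c0 := c 0) (d0 := d 0) (c1 := c 1) (d1 := d 1) (e := c 3) (f := d 3)
      (by rw [hγ_def, hδ_def]; field_simp; ring) (by rw [hγ_def, hδ_def]; field_simp; ring) p q
    rw [hu0, hu1] at this
    rw [← this, hv3]
  -- the two ratios are distinct
  have hcross : α * δ - β * γ ≠ 0 := by
    have hkey : α * δ - β * γ = (c 2 * d 3 - c 3 * d 2) / det := by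
      rw [hα_def, hβ_def, hγ_def, hδ_def, hdet_def]
      have hdet' : c 0 * d 1 - c 1 * d 0 ≠ 0 := hdet
      rw [div_mul_div_comm, div_mul_div_comm, ← sub_div,
        div_eq_div_iff (mul_ne_zero hdet' hdet') hdet']
      ring
    rw [hkey]
    exact div_ne_zero (sub_ne_zero.mpr (hcd 2 3 (by decide))) hdet
  clear_value α β γ δ
  clear hα_def hβ_def hγ_def hδ_def
  -- square roots of the ratios
  obtain ⟨ρ, hρ⟩ := IsAlgClosed.exists_pow_nat_eq (k := ℂ) (-(α⁻¹ * β)) zero_lt_two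
  obtain ⟨σ, hσ⟩ := IsAlgClosed.exists_pow_nat_eq (k := ℂ) (-(γ⁻¹ * δ)) zero_lt_two
  have hρ0 : ρ ≠ 0 := by
    intro h
    rw [h] at hρ
    have h0 : α⁻¹ * β = 0 := by
      have := hρ.symm
      simp only [ne_eq, OfNat.ofNat_ne_zero, not_false_eq_true, zero_pow, neg_eq_zero] at this
      exact this
    rcases mul_eq_zero.mp h0 with h' | h'
    · exact hα (inv_eq_zero.mp h')
    · exact hβ h'
  have hσ0 : σ ≠ 0 := by
    intro h
    rw [h] at hσ
    have h0 : γ⁻¹ * δ = 0 := by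
      have := hσ.symm
      simp only [ne_eq, OfNat.ofNat_ne_zero, not_false_eq_true, zero_pow, neg_eq_zero] at this
      exact this
    rcases mul_eq_zero.mp h0 with h' | h'
    · exact hγ (inv_eq_zero.mp h')
    · exact hδ h'
  have hρσ : ρ ^ 2 ≠ σ ^ 2 := by
    rw [hρ, hσ]
    intro h
    apply hcross
    have h2 : α⁻¹ * β = γ⁻¹ * δ := neg_injective h
    field_simp at h2
    linear_combination -h2
  obtain ⟨⟨s1, hs1⟩, ⟨s2, hs2⟩⟩ := aux_split hu01 hα hρ0 hρ hv2'
  obtain ⟨⟨s3, hs3⟩, ⟨s4, hs4⟩⟩ := aux_split hu01 hγ hσ0 hσ hv3'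
  -- degree bookkeeping
  obtain ⟨M, hM_def⟩ : ∃ M, max u0.natDegree u1.natDegree = M := ⟨_, rfl⟩
  have hdegL : max (u0 ^ 2).natDegree (u1 ^ 2).natDegree = N := by
    apply le_antisymm
    · refine max_le ?_ ?_
      · rw [← hu0]
        calc (C (c 0) * p + C (d 0) * q).natDegree
            ≤ max (C (c 0) * p).natDegree (C (d 0) * q).natDegree := natDegree_add_le _ _
          _ ≤ max p.natDegree q.natDegree :=
              max_le_max (natDegree_C_mul_le _ _) (natDegree_C_mul_le _ _)
          _ = N := hN
      · rw [← hu1]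
        calc (C (c 1) * p + C (d 1) * q).natDegree
            ≤ max (C (c 1) * p).natDegree (C (d 1) * q).natDegree := natDegree_add_le _ _
          _ ≤ max p.natDegree q.natDegree :=
              max_le_max (natDegree_C_mul_le _ _) (natDegree_C_mul_le _ _)
          _ = N := hN
    · rw [← hN]
      refine max_le ?_ ?_
      · calc p.natDegree = (C (d 1 / det) * u0 ^ 2 + C (-(d 0) / det) * u1 ^ 2).natDegree := by
              rw [← hp_comb]
          _ ≤ max (C (d 1 / det) * u0 ^ 2).natDegree (C (-(d 0) / det) * u1 ^ 2).natDegree :=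
              natDegree_add_le _ _
          _ ≤ max (u0 ^ 2).natDegree (u1 ^ 2).natDegree :=
              max_le_max (natDegree_C_mul_le _ _) (natDegree_C_mul_le _ _)
      · calc q.natDegree = (C (-(c 1) / det) * u0 ^ 2 + C (c 0 / det) * u1 ^ 2).natDegree := by
              rw [← hq_comb]
          _ ≤ max (C (-(c 1) / det) * u0 ^ 2).natDegree (C (c 0 / det) * u1 ^ 2).natDegree :=
              natDegree_add_le _ _
          _ ≤ max (u0 ^ 2).natDegree (u1 ^ 2).natDegree :=
              max_le_max (natDegree_C_mul_le _ _) (natDegree_C_mul_le _ _)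
  have h2M : 2 * M = N := by
    rw [natDegree_pow, natDegree_pow] at hdegL
    omega
  have hMlt : M < N := by omega
  have hfin := IH M hMlt u0 u1 hu01 hM_def ![1, 1, 1, 1] ![-ρ, ρ, -σ, σ]
    (aux_pairs hρ0 hσ0 hρσ) (aux_new_sq hs1 hs2 hs3 hs4)
  omega

lemma aux_frac_sq {P Q : Polynomial ℂ} (hQ : Q ≠ 0) (hcop : IsCoprime P Q) {y : RatFunc ℂ}
    (h : algebraMap (Polynomial ℂ) (RatFunc ℂ) P / algebraMap _ _ Q = y ^ 2) :
    (∃ r, P = r ^ 2) ∧ (∃ s, Q = s ^ 2) := by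
  have hinj : Function.Injective (algebraMap (Polynomial ℂ) (RatFunc ℂ)) :=
    IsFractionRing.injective _ _
  have hQ' : algebraMap (Polynomial ℂ) (RatFunc ℂ) Q ≠ 0 := RatFunc.algebraMap_ne_zero hQ
  have hd' : algebraMap (Polynomial ℂ) (RatFunc ℂ) y.denom ≠ 0 :=
    RatFunc.algebraMap_ne_zero (RatFunc.denom_ne_zero y)
  have key : P * y.denom ^ 2 = y.num ^ 2 * Q := by
    apply hinj
    rw [map_mul, map_mul, map_pow, map_pow]
    rw [← RatFunc.num_div_denom y, div_pow, div_eq_div_iff hQ' (pow_ne_zero 2 hd')] at h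
    exact h
  have hnd : IsCoprime y.num y.denom := RatFunc.isCoprime_num_denom y
  have d1 : Q ∣ y.denom ^ 2 * P := ⟨y.num ^ 2, by linear_combination key⟩
  have h1 : Q ∣ y.denom ^ 2 := hcop.symm.dvd_of_dvd_mul_right d1
  have d2 : y.denom ^ 2 ∣ Q * y.num ^ 2 := ⟨P, by linear_combination -key⟩
  have h2 : y.denom ^ 2 ∣ Q := (hnd.symm.pow).dvd_of_dvd_mul_right d2
  have d3 : y.num ^ 2 ∣ P * y.denom ^ 2 := ⟨Q, by linear_combination key⟩
  have h3 : y.num ^ 2 ∣ P := (hnd.pow).dvd_of_dvd_mul_right d3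
  have d4 : P ∣ y.num ^ 2 * Q := ⟨y.denom ^ 2, by linear_combination -key⟩
  have h4 : P ∣ y.num ^ 2 := hcop.dvd_of_dvd_mul_right d4
  exact ⟨aux_sq_of_associated (associated_of_dvd_dvd h3 h4),
    aux_sq_of_associated (associated_of_dvd_dvd h2 h1)⟩

/-- Existence of a `ℂ`-algebra endomorphism of `ℂ(x)` sending `X` to any
non-constant rational function. -/
lemma aux_exists_algHom (f : RatFunc ℂ) (hf : ∀ c : ℂ, f ≠ RatFunc.C c) :
    ∃ φ : RatFunc ℂ →ₐ[ℂ] RatFunc ℂ, φ RatFunc.X = f := by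
  have hinj : Function.Injective (Polynomial.aeval f : Polynomial ℂ →ₐ[ℂ] RatFunc ℂ) := by
    rw [injective_iff_map_eq_zero]
    intro p hp
    by_contra hp0
    have halg : IsAlgebraic ℂ f := ⟨p, hp0, hp⟩
    have hint : IsIntegral ℂ f := halg.isIntegral
    have hdeg : (minpoly ℂ f).degree = 1 :=
      IsAlgClosed.degree_eq_one_of_irreducible ℂ (minpoly.irreducible hint)
    obtain ⟨c, hc⟩ := minpoly.mem_range_of_degree_eq_one ℂ f hdeg
    exact hf c (by rw [← hc, RatFunc.algebraMap_eq_C])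
  refine ⟨RatFunc.liftAlgHom (Polynomial.aeval f)
    (nonZeroDivisors_le_comap_nonZeroDivisors_of_injective _ hinj), ?_⟩
  have h1 : (RatFunc.X : RatFunc ℂ) =
      algebraMap (Polynomial ℂ) (RatFunc ℂ) Polynomial.X / algebraMap (Polynomial ℂ) (RatFunc ℂ) 1 := by
    rw [map_one, div_one, RatFunc.algebraMap_X]
  rw [h1, RatFunc.liftAlgHom_apply_div]
  simp

lemma aux_pairs2 {b0 b1 b2 : ℂ} (h01 : b0 ≠ b1) (h02 : b0 ≠ b2) (h12 : b1 ≠ b2) :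
    ∀ i j : Fin 4, i ≠ j →
      (![1,1,1,0] : Fin 4 → ℂ) i * (![-b0,-b1,-b2,1] : Fin 4 → ℂ) j ≠
      (![1,1,1,0] : Fin 4 → ℂ) j * (![-b0,-b1,-b2,1] : Fin 4 → ℂ) i := by
  intro i j hij
  fin_cases i <;> fin_cases j <;> simp_all <;>
    first
      | exact fun h => h01 h.symm
      | exact fun h => h02 h.symm
      | exact fun h => h12 h.symm

lemma aux_sqs2 {p q : Polynomial ℂ} {b0 b1 b2 : ℂ}
    (h0 : ∃ r, p - Polynomial.C b0 * q = r ^ 2)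
    (h1 : ∃ r, p - Polynomial.C b1 * q = r ^ 2)
    (h2 : ∃ r, p - Polynomial.C b2 * q = r ^ 2)
    (h3 : ∃ s, q = s ^ 2) :
    ∀ i : Fin 4, ∃ v, Polynomial.C ((![1,1,1,0] : Fin 4 → ℂ) i) * p +
      Polynomial.C ((![-b0,-b1,-b2,1] : Fin 4 → ℂ) i) * q = v ^ 2 := by
  intro i
  fin_cases i
  · obtain ⟨r, hr⟩ := h0
    refine ⟨r, ?_⟩
    simp only [Matrix.cons_val_zero, map_one, one_mul, map_neg]
    simp
    linear_combination hr
  · obtain ⟨r, hr⟩ := h1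
    refine ⟨r, ?_⟩
    simp
    linear_combination hr
  · obtain ⟨r, hr⟩ := h2
    refine ⟨r, ?_⟩
    simp
    linear_combination hr
  · obtain ⟨s, hs⟩ := h3
    refine ⟨s, ?_⟩
    simp
    linear_combination hs

/-- For pairwise distinct `a₁, …, a_m ∈ ℂ`, the set `{√(x-a₁), …, √(x-a_m)}` is
rationalizable over `ℂ(x)` if and only if `m ≤ 2`. -/
theorem stmt11 {m : ℕ} (a : Fin m → ℂ) (ha : Function.Injective a) :
    (∃ φ : RatFunc ℂ →ₐ[ℂ] RatFunc ℂ,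
        ∀ i, ∃ h : RatFunc ℂ, φ (RatFunc.X - RatFunc.C (a i)) = h ^ 2) ↔ m ≤ 2 := by
  constructor
  · rintro ⟨φ, hφ⟩
    by_contra hm
    push_neg at hm
    have hφC : ∀ b : ℂ, φ (RatFunc.C b) = RatFunc.C b := fun b => by
      rw [← RatFunc.algebraMap_eq_C]; exact φ.commutes b
    set f : RatFunc ℂ := φ RatFunc.X with hf_def
    have hsq' : ∀ i : Fin m, ∃ h : RatFunc ℂ, f - RatFunc.C (a i) = h ^ 2 := by
      intro i
      obtain ⟨h, hh⟩ := hφ i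
      exact ⟨h, by rw [← hh, map_sub, hφC]⟩
    have hq0 : f.denom ≠ 0 := RatFunc.denom_ne_zero f
    have hq' : algebraMap (Polynomial ℂ) (RatFunc ℂ) f.denom ≠ 0 :=
      RatFunc.algebraMap_ne_zero hq0
    have hcop : IsCoprime f.num f.denom := RatFunc.isCoprime_num_denom f
    have hPQ : ∀ i : Fin m, (∃ r, f.num - Polynomial.C (a i) * f.denom = r ^ 2) ∧
        (∃ s, f.denom = s ^ 2) := by
      intro i
      obtain ⟨h, hh⟩ := hsq' i
      have hcopi : IsCoprime (f.num - Polynomial.C (a i) * f.denom) f.denom := by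
        obtain ⟨x, y, hxy⟩ := hcop
        exact ⟨x, y + x * Polynomial.C (a i), by linear_combination hxy⟩
      apply aux_frac_sq hq0 hcopi (y := h)
      have heq : (algebraMap (Polynomial ℂ) (RatFunc ℂ)
            (f.num - Polynomial.C (a i) * f.denom)) / algebraMap _ _ f.denom
          = f - RatFunc.C (a i) := by
        rw [map_sub, map_mul, RatFunc.algebraMap_C, sub_div, mul_div_assoc,
          div_self hq', mul_one, RatFunc.num_div_denom]
      rw [heq, hh]
    have h0m : 0 < m := by omega
    have h1m : 1 < m := by omega
    have h2m : 2 < m := by omega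
    set b0 : ℂ := a ⟨0, h0m⟩ with hb0
    set b1 : ℂ := a ⟨1, h1m⟩ with hb1
    set b2 : ℂ := a ⟨2, h2m⟩ with hb2
    have h01 : b0 ≠ b1 := fun h => by have := ha h; simp [Fin.ext_iff] at this
    have h02 : b0 ≠ b2 := fun h => by have := ha h; simp [Fin.ext_iff] at this
    have h12 : b1 ≠ b2 := fun h => by have := ha h; simp [Fin.ext_iff] at this
    have hres := aux_no_four_squares (max f.num.natDegree f.denom.natDegree)
      f.num f.denom hcop rfl ![1, 1, 1, 0] ![-b0, -b1, -b2, 1]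
      (aux_pairs2 h01 h02 h12)
      (aux_sqs2 (hPQ ⟨0, h0m⟩).1 (hPQ ⟨1, h1m⟩).1 (hPQ ⟨2, h2m⟩).1 (hPQ ⟨0, h0m⟩).2)
    obtain ⟨hp0, hq0'⟩ := hres
    have hq1 : f.denom = 1 := by
      have := Polynomial.Monic.natDegree_eq_zero (RatFunc.monic_denom f)
      exact this.mp hq0'
    obtain ⟨k, hk⟩ : ∃ k, f.num = Polynomial.C k :=
      ⟨_, Polynomial.eq_C_of_natDegree_eq_zero hp0⟩
    have hf : f = RatFunc.C k := by
      conv_lhs => rw [← RatFunc.num_div_denom f, hk, hq1]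
      rw [map_one, div_one, RatFunc.algebraMap_C]
    have hzero : φ (RatFunc.X - RatFunc.C k) = 0 := by
      rw [map_sub, hφC, ← hf_def, hf]
      exact sub_self _
    have hXC : RatFunc.X - RatFunc.C k ≠ 0 := by
      intro h
      apply Polynomial.X_ne_C k
      apply IsFractionRing.injective (Polynomial ℂ) (RatFunc ℂ)
      rw [RatFunc.algebraMap_X, RatFunc.algebraMap_C]
      exact sub_eq_zero.mp h
    exact hXC (φ.toRingHom.injective (by simpa using hzero))
  · intro hm
    interval_cases m
    · exact ⟨AlgHom.id ℂ _, fun i => i.elim0⟩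
    · -- m = 1
      have h1 : ∀ c : ℂ, RatFunc.C (a 0) + RatFunc.X ^ 2 ≠ RatFunc.C c := by
        intro c h
        have h2 : (Polynomial.X : Polynomial ℂ) ^ 2 = Polynomial.C (c - a 0) := by
          apply IsFractionRing.injective (Polynomial ℂ) (RatFunc ℂ)
          rw [map_pow, RatFunc.algebraMap_X, RatFunc.algebraMap_C, map_sub]
          linear_combination h
        have h3 := congrArg Polynomial.natDegree h2
        simp [Polynomial.natDegree_pow, Polynomial.natDegree_C] at h3
      obtain ⟨φ, hφX⟩ := aux_exists_algHom (RatFunc.C (a 0) + RatFunc.X ^ 2) h1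
      have hφC : ∀ b : ℂ, φ (RatFunc.C b) = RatFunc.C b := fun b => by
        rw [← RatFunc.algebraMap_eq_C]; exact φ.commutes b
      refine ⟨φ, fun i => ⟨RatFunc.X, ?_⟩⟩
      have hi : i = 0 := Subsingleton.elim i 0
      rw [hi, map_sub, hφX, hφC]
      ring
    · -- m = 2
      have hX : (RatFunc.X : RatFunc ℂ) ≠ 0 := RatFunc.X_ne_zero
      have hXinv : RatFunc.X * RatFunc.X⁻¹ = 1 := mul_inv_cancel₀ hX
      have hd : a 1 - a 0 ≠ 0 := sub_ne_zero.mpr (ha.ne (by decide))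
      obtain ⟨e, he_def⟩ : ∃ e : ℂ, e = (a 1 - a 0) / 4 := ⟨_, rfl⟩
      have ha1 : a 1 = a 0 + 4 * e := by rw [he_def]; field_simp; ring
      have hca : RatFunc.C (a 1) = RatFunc.C (a 0) + 4 * RatFunc.C e := by
        rw [ha1, map_add, map_mul, map_ofNat]
      obtain ⟨g, hg_def⟩ : ∃ g : RatFunc ℂ, g = RatFunc.X + RatFunc.C e * RatFunc.X⁻¹ :=
        ⟨_, rfl⟩
      have hf : ∀ c : ℂ, RatFunc.C (a 0) + g ^ 2 ≠ RatFunc.C c := by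
        intro c h
        have expand : RatFunc.X ^ 2 + RatFunc.C e = g * RatFunc.X := by
          rw [hg_def]
          linear_combination -(RatFunc.C e) * hXinv
        have hg2 : g ^ 2 = RatFunc.C c - RatFunc.C (a 0) := by linear_combination h
        have h2 : (RatFunc.X ^ 2 + RatFunc.C e) ^ 2
            = (RatFunc.C c - RatFunc.C (a 0)) * RatFunc.X ^ 2 := by
          rw [expand, mul_pow, hg2]
        have h3 : (Polynomial.X ^ 2 + Polynomial.C e) ^ 2
            = Polynomial.C (c - a 0) * Polynomial.X ^ 2 := by
          apply IsFractionRing.injective (Polynomial ℂ) (RatFunc ℂ)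
          rw [map_mul, map_pow, map_pow, map_add, map_pow, RatFunc.algebraMap_X,
            RatFunc.algebraMap_C, RatFunc.algebraMap_C, map_sub]
          exact h2
        have h4 := congrArg Polynomial.natDegree h3
        rw [Polynomial.natDegree_pow, Polynomial.natDegree_X_pow_add_C] at h4
        have h5 : (Polynomial.C (c - a 0) * Polynomial.X ^ 2).natDegree ≤ 2 :=
          (Polynomial.natDegree_C_mul_le _ _).trans (by simp)
        omega
      obtain ⟨φ, hφX⟩ := aux_exists_algHom (RatFunc.C (a 0) + g ^ 2) hf
      have hφC : ∀ b : ℂ, φ (RatFunc.C b) = RatFunc.C b := fun b => by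
        rw [← RatFunc.algebraMap_eq_C]; exact φ.commutes b
      refine ⟨φ, fun i => ?_⟩
      fin_cases i
      · refine ⟨g, ?_⟩
        simp only [Fin.mk_zero, Fin.isValue]
        rw [map_sub, hφX, hφC]
        ring
      · refine ⟨RatFunc.X - RatFunc.C e * RatFunc.X⁻¹, ?_⟩
        simp only [Fin.mk_one, Fin.isValue]
        rw [map_sub, hφX, hφC, hg_def]
        linear_combination 4 * RatFunc.C e * hXinv - hca
end

section
/- Let a, b, c ∈ ℂ be pairwise distinct. The set {√((x−a)(x−b)), √((x−a)(x−c)), √((x−b)(x−c))} of square roots over ℂ(x) is rationalizable: there exists a ℂ-algebra endomorphism φ of ℂ(x) such that φ((x−a)(x−b)), φ((x−a)(x−c)), and φ((x−b)(x−c)) are all squares in ℂ(x). -/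
set_option maxHeartbeats 2000000
open scoped nonZeroDivisors

lemma transcendental_of_nonconst (f : RatFunc ℂ) (hf : ∀ e : ℂ, f ≠ RatFunc.C e) :
    Transcendental ℂ f := by
  intro h
  have hint : IsIntegral ℂ f := h.isIntegral
  have hirr := minpoly.irreducible hint
  have hdeg := IsAlgClosed.degree_eq_one_of_irreducible ℂ hirr
  have hmon := minpoly.monic hint
  have hrepr := Polynomial.eq_X_add_C_of_degree_le_one (p := minpoly ℂ f) hdeg.le
  have hc1 : (minpoly ℂ f).coeff 1 = 1 := by
    have := hmon.leadingCoeff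
    rwa [Polynomial.leadingCoeff, Polynomial.natDegree_eq_of_degree_eq_some hdeg] at this
  have haev := minpoly.aeval ℂ f
  rw [hrepr, hc1] at haev
  simp only [map_add, map_mul, Polynomial.aeval_X, Polynomial.aeval_C, map_one, one_mul] at haev
  have : f = RatFunc.C (-(minpoly ℂ f).coeff 0) := by
    rw [← RatFunc.algebraMap_eq_C, map_neg]
    linear_combination haev
  exact hf _ this


open Polynomial

theorem key13 (l : ℂ) (hl0 : l ≠ 0) (hl1 : l ≠ 1) :
    ∃ x : RatFunc ℂ, (∀ e : ℂ, x ≠ RatFunc.C e) ∧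
      (∃ h : RatFunc ℂ, x * (x - 1) = h ^ 2) ∧
      (∃ h : RatFunc ℂ, x * (x - RatFunc.C l) = h ^ 2) ∧
      (∃ h : RatFunc ℂ, (x - 1) * (x - RatFunc.C l) = h ^ 2) := by
  have hl1' : 1 - l ≠ 0 := sub_ne_zero.mpr (Ne.symm hl1)
  set NP : ℂ[X] := C (-l) * X ^ 2 + C (-(2 * (1 - l))) * X + C (1 - l) with hNP
  set DP : ℂ[X] := C l * X ^ 2 + C (1 - l) with hDP
  set SP : ℂ[X] := C l * X ^ 2 + C (-(2 * l)) * X + C (l - 1) with hSP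
  set np : RatFunc ℂ := algebraMap ℂ[X] (RatFunc ℂ) NP with hnp
  set dp : RatFunc ℂ := algebraMap ℂ[X] (RatFunc ℂ) DP with hdp
  set sp : RatFunc ℂ := algebraMap ℂ[X] (RatFunc ℂ) SP with hsp
  set L : RatFunc ℂ := RatFunc.C l with hLdef
  set T : RatFunc ℂ := RatFunc.X with hTdef
  have enp : np = -L * T ^ 2 - 2 * (1 - L) * T + (1 - L) := by
    simp only [hnp, hNP, map_add, map_mul, map_pow, RatFunc.algebraMap_C, RatFunc.algebraMap_X,
      map_neg, map_sub, map_one, map_ofNat]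
    ring
  have edp : dp = L * T ^ 2 + (1 - L) := by
    simp only [hdp, hDP, map_add, map_mul, map_pow, RatFunc.algebraMap_C, RatFunc.algebraMap_X,
      map_neg, map_sub, map_one, map_ofNat]
    rfl
  have esp : sp = L * T ^ 2 - 2 * L * T + (L - 1) := by
    simp only [hsp, hSP, map_add, map_mul, map_pow, RatFunc.algebraMap_C, RatFunc.algebraMap_X,
      map_neg, map_sub, map_one, map_ofNat]
    ring
  have hDN1 : DP - NP ≠ 0 := by
    intro h
    have h2 := congrArg (Polynomial.eval 1) h
    simp [hDP, hNP] at h2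
    have : (2:ℂ) = 0 := by linear_combination h2
    norm_num at this
  have hDN2 : DP + NP ≠ 0 := by
    intro h
    have h2 := congrArg (Polynomial.eval 0) h
    simp [hDP, hNP] at h2
    exact hl1' h2
  clear_value NP DP SP np dp sp L T
  have hdne : dp ^ 2 - np ^ 2 ≠ 0 := by
    have h : dp ^ 2 - np ^ 2 = algebraMap ℂ[X] (RatFunc ℂ) ((DP - NP) * (DP + NP)) := by
      rw [map_mul, map_sub, map_add, ← hnp, ← hdp]; ring
    rw [h]
    exact RatFunc.algebraMap_ne_zero (mul_ne_zero hDN1 hDN2)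
  have hdne2 : (L * T ^ 2 + (1 - L)) ^ 2 - (-L * T ^ 2 - 2 * (1 - L) * T + (1 - L)) ^ 2 ≠ 0 := by
    rw [← enp, ← edp]; exact hdne
  have hLne : (1 : RatFunc ℂ) - L ≠ 0 := by
    rw [hLdef, ← map_one (RatFunc.C (K := ℂ)), ← map_sub]
    intro h
    exact hl1' (RingHom.injective (RatFunc.C (K := ℂ)) (by rw [h, map_zero]))
  have hdpne : dp ≠ 0 := by
    rw [hdp]
    apply RatFunc.algebraMap_ne_zero
    intro h
    have h2 := congrArg (Polynomial.eval 1) h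
    simp [hDP] at h2
  set x : RatFunc ℂ := (dp ^ 2 - L * np ^ 2) / (dp ^ 2 - np ^ 2) with hx
  have hnonconst : ∀ e : ℂ, x ≠ RatFunc.C e := by
    intro e he
    rw [hx, div_eq_iff hdne] at he
    by_cases hel : e = l
    · subst hel
      have h0 : (1 - L) * dp ^ 2 = 0 := by rw [hLdef] at he ⊢; linear_combination he
      rcases mul_eq_zero.mp h0 with h | h
      · exact hLne h
      · exact hdpne (pow_eq_zero_iff two_ne_zero |>.mp h)
    · have hle : RatFunc.C (l - e) ≠ 0 := by
        intro h
        have h2 : l - e = 0 := by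
          apply RingHom.injective (RatFunc.C (K := ℂ))
          rw [h, map_zero]
        exact hel (sub_eq_zero.mp h2).symm
      have hk : np ^ 2 * RatFunc.C (l - e) = dp ^ 2 * RatFunc.C (1 - e) := by
        rw [hLdef] at he
        simp only [map_sub, map_one]
        linear_combination -he
      have hpoly : NP ^ 2 * Polynomial.C (l - e) = DP ^ 2 * Polynomial.C (1 - e) := by
        apply RatFunc.algebraMap_injective
        rw [map_mul, map_mul, map_pow, map_pow, RatFunc.algebraMap_C, RatFunc.algebraMap_C,
          ← hnp, ← hdp]
        exact hk
      have h2 := congrArg (fun p => Polynomial.eval 0 (Polynomial.derivative p)) hpoly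
      simp [hNP, hDP, Polynomial.derivative_mul, Polynomial.derivative_pow] at h2
      -- expect a contradiction with 1 - l ≠ 0
      rcases h2 with h2 | h2
      · exact hl1' h2
      · exact hel (sub_eq_zero.mp h2).symm
  have hx1 : x - 1 = ((1 - L) * np ^ 2) / (dp ^ 2 - np ^ 2) := by
    rw [hx, eq_div_iff hdne, sub_mul, div_mul_cancel₀ _ hdne, one_mul]
    ring
  have hxL : x - L = ((1 - L) * dp ^ 2) / (dp ^ 2 - np ^ 2) := by
    rw [hx, eq_div_iff hdne, sub_mul, div_mul_cancel₀ _ hdne]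
    ring
  have hxx : x = ((1 - L) * sp ^ 2) / (dp ^ 2 - np ^ 2) := by
    rw [hx, div_eq_div_iff hdne hdne, enp, edp, esp]
    ring
  refine ⟨x, hnonconst,
    ⟨(1 - L) * np * sp / (dp ^ 2 - np ^ 2), ?_⟩,
    ⟨(1 - L) * sp * dp / (dp ^ 2 - np ^ 2), ?_⟩,
    ⟨(1 - L) * np * dp / (dp ^ 2 - np ^ 2), ?_⟩⟩
  · rw [hx1, hxx, div_mul_div_comm, div_pow]
    congr 1 <;> ring
  · rw [hxL, hxx, div_mul_div_comm, div_pow]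
    congr 1 <;> ring
  · rw [hx1, hxL, div_mul_div_comm, div_pow]
    congr 1 <;> ring

/-- For pairwise distinct `a, b, c ∈ ℂ`, the set
`{√((x-a)(x-b)), √((x-a)(x-c)), √((x-b)(x-c))}` is rationalizable over `ℂ(x)`. -/
theorem stmt13 (a b c : ℂ) (hab : a ≠ b) (hac : a ≠ c) (hbc : b ≠ c) :
    ∃ φ : RatFunc ℂ →ₐ[ℂ] RatFunc ℂ,
      (∃ h : RatFunc ℂ, φ ((RatFunc.X - RatFunc.C a) * (RatFunc.X - RatFunc.C b)) = h ^ 2) ∧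
      (∃ h : RatFunc ℂ, φ ((RatFunc.X - RatFunc.C a) * (RatFunc.X - RatFunc.C c)) = h ^ 2) ∧
      (∃ h : RatFunc ℂ, φ ((RatFunc.X - RatFunc.C b) * (RatFunc.X - RatFunc.C c)) = h ^ 2) := by
  have hba : b - a ≠ 0 := sub_ne_zero.mpr hab.symm
  set l : ℂ := (c - a) / (b - a) with hl
  have hl0 : l ≠ 0 := div_ne_zero (sub_ne_zero.mpr hac.symm) hba
  have hl1 : l ≠ 1 := by
    intro h; apply hbc; rw [hl, div_eq_one_iff_eq hba] at h; exact (sub_left_inj.mp h).symm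
  obtain ⟨x, hxnc, ⟨h1, e1⟩, ⟨h2, e2⟩, ⟨h3, e3⟩⟩ := key13 l hl0 hl1
  set f : RatFunc ℂ := RatFunc.C a + RatFunc.C (b - a) * x with hf
  have hCba : RatFunc.C (b - a) ≠ 0 := by
    intro h
    exact hba (RingHom.injective (RatFunc.C (K := ℂ)) (by rw [h, map_zero]))
  have hfnc : ∀ e : ℂ, f ≠ RatFunc.C e := by
    intro e he
    apply hxnc ((e - a) / (b - a))
    rw [map_div₀, eq_div_iff hCba, map_sub]
    rw [hf] at he
    rw [map_sub] at he ⊢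
    linear_combination he
  have ht : Transcendental ℂ f := transcendental_of_nonconst f hfnc
  have hinj : Function.Injective (Polynomial.aeval f : ℂ[X] →ₐ[ℂ] RatFunc ℂ) :=
    transcendental_iff_injective.mp ht
  have hcond : (ℂ[X])⁰ ≤ (RatFunc ℂ)⁰.comap (Polynomial.aeval f : ℂ[X] →ₐ[ℂ] RatFunc ℂ) :=
    nonZeroDivisors_le_comap_nonZeroDivisors_of_injective _ hinj
  refine ⟨RatFunc.liftAlgHom (Polynomial.aeval f) hcond, ?_⟩
  set φ := RatFunc.liftAlgHom (Polynomial.aeval f) hcond with hφ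
  have happ : ∀ p : ℂ[X], φ (algebraMap ℂ[X] (RatFunc ℂ) p) = Polynomial.aeval f p := by
    intro p
    have h := RatFunc.liftAlgHom_apply_div (φ := Polynomial.aeval f) (hφ := hcond) p 1
    simpa using h
  have hX : φ RatFunc.X = f := by
    rw [← RatFunc.algebraMap_X, happ, Polynomial.aeval_X]
  have hC : ∀ u : ℂ, φ (RatFunc.C u) = RatFunc.C u := by
    intro u
    rw [← RatFunc.algebraMap_C, happ, Polynomial.aeval_C, RatFunc.algebraMap_eq_C,
      RatFunc.algebraMap_C]
  have hfa : f - RatFunc.C a = RatFunc.C (b - a) * x := by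
    rw [hf]; ring
  have hfb : f - RatFunc.C b = RatFunc.C (b - a) * (x - 1) := by
    rw [hf, map_sub]; ring
  have hfc : f - RatFunc.C c = RatFunc.C (b - a) * (x - RatFunc.C l) := by
    rw [hf]
    have : RatFunc.C (b - a) * RatFunc.C l = RatFunc.C (c - a) := by
      rw [← map_mul]
      congr 1
      field_simp [hl]
      rw [hl]; field_simp
    rw [mul_sub, this, map_sub, map_sub]
    ring
  refine ⟨⟨RatFunc.C (b - a) * h1, ?_⟩, ⟨RatFunc.C (b - a) * h2, ?_⟩,
    ⟨RatFunc.C (b - a) * h3, ?_⟩⟩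
  · rw [map_mul, map_sub, map_sub, hX, hC, hC, hfa, hfb]
    rw [mul_pow]
    linear_combination (RatFunc.C (b - a)) ^ 2 * e1
  · rw [map_mul, map_sub, map_sub, hX, hC, hC, hfa, hfc]
    rw [mul_pow]
    linear_combination (RatFunc.C (b - a)) ^ 2 * e2
  · rw [map_mul, map_sub, map_sub, hX, hC, hC, hfb, hfc]
    rw [mul_pow]
    linear_combination (RatFunc.C (b - a)) ^ 2 * e3
end
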